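/- Let T ≥ 1 be an integer and let z, z' ∈ [0,1]^T satisfy z ⪰ z'. If μ ∈ [0,1] satisfies μ ≤ μ_{z'}, then Ψ(z,μ) ≥ Ψ(z',μ). -/

import Mathlib

/-!
For a bet `α ≥ 0` every summand `log (1 + α (z_t - μ))` is monotone in `z_t`, so raising `z'` to `z`
can only raise the payoff. For a bet `α < 0` on `z'`, the bound `log x ≤ x - 1` gives a payoff of at
most `α (μ_{z'} - μ) ≤ 0`, which is the payoff of the bet `α = 0` on `z`. The infinite bet
`α = -∞` is admissible only for `μ = 1`, and then `μ ≤ μ_{z'}` forces `z' ≡ 1`, so that bet pays `0`.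
-/

open MeasureTheory Set

/-- Extended-real logarithm: `log ⊤ = ⊤`, `log x = -∞` for `x ≤ 0` (in particular `log 0 = -∞`). -/
noncomputable def elog (x : EReal) : EReal :=
  if x = ⊤ then ⊤ else if x ≤ 0 then ⊥ else ((Real.log x.toReal : ℝ) : EReal)

/-- Lower endpoint `-1/(1-μ)` of the betting interval, with the convention `1/0 = +∞`. -/
noncomputable def betLower (μ : ℝ) : EReal := if μ = 1 then ⊥ else ((-(1 - μ)⁻¹ : ℝ) : EReal)

/-- Upper endpoint `1/μ` of the betting interval, with the convention `1/0 = +∞`. -/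
noncomputable def betUpper (μ : ℝ) : EReal := if μ = 0 then ⊤ else ((μ⁻¹ : ℝ) : EReal)

/-- The betting interval `A_μ = [-1/(1-μ), 1/μ]` (as a set of extended reals). -/
noncomputable def betSet (μ : ℝ) : Set EReal := Set.Icc (betLower μ) (betUpper μ)

/-- `(1/T) ∑_t log(1 + α (z_t - μ))`, with EReal conventions (`0 * ±∞ = 0`, `log 0 = -∞`). -/
noncomputable def betTerm {T : ℕ} (z : Fin T → ℝ) (μ : ℝ) (α : EReal) : EReal :=
  (((T : ℝ)⁻¹ : ℝ) : EReal) * ∑ t : Fin T, elog (1 + α * ((z t - μ : ℝ) : EReal))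

/-- `Ψ(z, μ) = sup_{α ∈ A_μ} (1/T) ∑_t log(1 + α (z_t - μ))`. -/
noncomputable def Psi {T : ℕ} (z : Fin T → ℝ) (μ : ℝ) : EReal :=
  ⨆ α ∈ betSet μ, betTerm z μ α

/-- `μ_z = (1/T) ∑_t z_t`. -/
noncomputable def muz {T : ℕ} (z : Fin T → ℝ) : ℝ := (T : ℝ)⁻¹ * ∑ t, z t

@[norm_cast]
lemma EReal.coe_finset_sum {ι : Type*} (s : Finset ι) (f : ι → ℝ) :
    ((∑ i ∈ s, f i : ℝ) : EReal) = ∑ i ∈ s, (f i : EReal) :=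
  map_sum (⟨⟨Real.toEReal, EReal.coe_zero⟩, EReal.coe_add⟩ : ℝ →+ EReal) f s

lemma elog_monotone : Monotone elog := by
  intro x y hxy
  by_cases hy : y = ⊤
  · simp [elog, hy]
  have hx : x ≠ ⊤ := ne_top_of_le_ne_top hy hxy
  by_cases hx0 : x ≤ 0
  · simp [elog, hx, hx0]
  have hy0 : ¬ y ≤ 0 := fun h => hx0 (hxy.trans h)
  have hxbot : x ≠ ⊥ := ne_bot_of_le_ne_bot (by simp) (not_le.mp hx0).le
  have hxpos : 0 < x.toReal := EReal.toReal_pos (not_le.mp hx0) hx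
  simp only [elog, if_neg hx, if_neg hy, if_neg hx0, if_neg hy0, EReal.coe_le_coe_iff]
  exact Real.log_le_log hxpos (EReal.toReal_le_toReal hxy hxbot hy)

lemma elog_one : elog 1 = 0 := by
  rw [elog, ← EReal.coe_one, if_neg (EReal.coe_ne_top 1), if_neg (by norm_num)]
  simp

lemma elog_coe_le_sub_one (x : ℝ) : elog x ≤ ((x - 1 : ℝ) : EReal) := by
  by_cases hx : x ≤ 0
  · simp [elog, EReal.coe_nonpos.mpr hx]
  have hx' : ¬ (x : EReal) ≤ 0 := by exact_mod_cast hx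
  simp only [elog, EReal.coe_ne_top, if_false, if_neg hx', EReal.toReal_coe, EReal.coe_le_coe_iff]
  linarith [Real.log_le_sub_one_of_pos (not_le.mp hx)]

section Bets

variable {T : ℕ} {μ : ℝ}

lemma zero_mem_betSet (hμ : μ ∈ Icc (0 : ℝ) 1) : (0 : EReal) ∈ betSet μ := by
  constructor
  · unfold betLower
    split_ifs
    · exact bot_le
    · exact EReal.coe_nonpos.mpr (neg_nonpos.mpr (inv_nonneg.mpr (sub_nonneg.mpr hμ.2)))
  · unfold betUpper
    split_ifs
    · exact le_top
    · exact EReal.coe_nonneg.mpr (inv_nonneg.mpr hμ.1)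

lemma betTerm_le_Psi (z : Fin T → ℝ) {α : EReal} (hα : α ∈ betSet μ) :
    betTerm z μ α ≤ Psi z μ :=
  le_iSup₂_of_le (f := fun α _ => betTerm z μ α) α hα le_rfl

lemma betLower_eq_bot_iff : betLower μ = ⊥ ↔ μ = 1 := by
  unfold betLower
  split_ifs with h <;> simp [h]

lemma betTerm_eq_zero_of_forall_mul_eq_zero {z : Fin T → ℝ} {α : EReal}
    (h : ∀ t, α * ((z t - μ : ℝ) : EReal) = 0) : betTerm z μ α = 0 := by
  simp only [betTerm, h, add_zero, elog_one, Finset.sum_const_zero, mul_zero]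

lemma betTerm_zero (z : Fin T → ℝ) (μ : ℝ) : betTerm z μ 0 = 0 :=
  betTerm_eq_zero_of_forall_mul_eq_zero fun _ => zero_mul _

lemma betTerm_monotone {α : EReal} (hα : 0 ≤ α) : Monotone fun z : Fin T → ℝ => betTerm z μ α := by
  intro z' z hz
  refine mul_le_mul_of_nonneg_left (Finset.sum_le_sum fun t _ => ?_) (by positivity)
  refine elog_monotone (add_le_add_right (mul_le_mul_of_nonneg_left ?_ hα) 1)
  exact EReal.coe_le_coe_iff.mpr (sub_le_sub_right (hz t) μ)

lemma natCast_mul_muz (z : Fin T → ℝ) : (T : ℝ) * muz z = ∑ t, z t := by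
  rcases T.eq_zero_or_pos with rfl | hT
  · simp
  · rw [muz, ← mul_assoc, mul_inv_cancel₀ (by positivity), one_mul]

lemma eq_of_forall_le_of_le_muz {z : Fin T → ℝ} {c : ℝ} (hle : ∀ t, z t ≤ c) (hc : c ≤ muz z)
    (t : Fin T) : z t = c := by
  have hsum_le : ∑ s, z s ≤ ∑ _s : Fin T, c := Finset.sum_le_sum fun s _ => hle s
  have hsum_ge : ∑ _s : Fin T, c ≤ ∑ s, z s := by
    rw [← natCast_mul_muz z, Finset.sum_const, Finset.card_univ, Fintype.card_fin, nsmul_eq_mul]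
    exact mul_le_mul_of_nonneg_left hc (Nat.cast_nonneg T)
  exact (Finset.sum_eq_sum_iff_of_le fun s _ => hle s).mp (hsum_le.antisymm hsum_ge) t
    (Finset.mem_univ t)

lemma betTerm_coe_nonpos {z : Fin T → ℝ} {a : ℝ} (ha : a ≤ 0) (hμ : μ ≤ muz z) :
    betTerm z μ a ≤ 0 := by
  have hterm : ∀ t,
      elog (1 + (a : EReal) * ((z t - μ : ℝ) : EReal)) ≤ ((a * (z t - μ) : ℝ) : EReal) := by
    intro t
    have := elog_coe_le_sub_one (1 + a * (z t - μ))
    simpa only [EReal.coe_add, EReal.coe_mul, EReal.coe_one, add_sub_cancel_left] using this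
  have hsum : ∑ t, a * (z t - μ) = a * (T * (muz z - μ)) := by
    rw [← Finset.mul_sum, Finset.sum_sub_distrib, ← natCast_mul_muz]
    simp [mul_sub]
  calc betTerm z μ a
      ≤ (((T : ℝ)⁻¹ : ℝ) : EReal) * ∑ t, ((a * (z t - μ) : ℝ) : EReal) :=
        mul_le_mul_of_nonneg_left (Finset.sum_le_sum fun t _ => hterm t) (by positivity)
    _ = (((T : ℝ)⁻¹ * (a * (T * (muz z - μ))) : ℝ) : EReal) := by
        rw [← hsum, EReal.coe_mul, EReal.coe_finset_sum]
    _ ≤ 0 := by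
        refine EReal.coe_nonpos.mpr (mul_nonpos_of_nonneg_of_nonpos (by positivity) ?_)
        exact mul_nonpos_of_nonpos_of_nonneg ha
          (mul_nonneg (Nat.cast_nonneg T) (sub_nonneg.mpr hμ))

end Bets

theorem psi_ge_of_ge_general {T : ℕ} (z z' : Fin T → ℝ)
    (hz' : ∀ t, z' t ∈ Set.Icc (0 : ℝ) 1)
    (hord : ∀ t, z' t ≤ z t) (μ : ℝ) (hμ : μ ∈ Set.Icc (0 : ℝ) 1) (hμz : μ ≤ muz z') :
    Psi z' μ ≤ Psi z μ := by
  have hPsi_nonneg : 0 ≤ Psi z μ := betTerm_zero z μ ▸ betTerm_le_Psi z (zero_mem_betSet hμ)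
  refine iSup₂_le fun α hα => ?_
  rcases le_or_gt 0 α with hα0 | hα0
  · exact (betTerm_monotone hα0 hord).trans (betTerm_le_Psi z hα)
  refine le_trans ?_ hPsi_nonneg
  induction α with
  | bot =>
    obtain rfl : μ = 1 := betLower_eq_bot_iff.mp (le_bot_iff.mp hα.1)
    refine (betTerm_eq_zero_of_forall_mul_eq_zero fun t => ?_).le
    rw [eq_of_forall_le_of_le_muz (fun t => (hz' t).2) hμz t, sub_self, EReal.coe_zero, mul_zero]
  | coe a => exact betTerm_coe_nonpos (EReal.coe_neg'.mp hα0).le hμz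
  | top => exact absurd hα0 (not_lt.mpr le_top)

/-- If `z ⪰ z'` (coordinatewise) with values in `[0,1]` and `μ ∈ [0,1]` with `μ ≤ μ_{z'}`,
then `Ψ(z, μ) ≥ Ψ(z', μ)`. -/
theorem psi_ge_of_ge {T : ℕ} (hT : 1 ≤ T) (z z' : Fin T → ℝ)
    (hz : ∀ t, z t ∈ Set.Icc (0 : ℝ) 1) (hz' : ∀ t, z' t ∈ Set.Icc (0 : ℝ) 1)
    (hord : ∀ t, z' t ≤ z t) (μ : ℝ) (hμ : μ ∈ Set.Icc (0 : ℝ) 1) (hμz : μ ≤ muz z') :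
    Psi z' μ ≤ Psi z μ :=
  psi_ge_of_ge_general z z' hz' hord μ hμ hμz
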